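/- arXiv:2104.07752 — 2 statements merged into one kernel-verified Lean document; each statement's English description precedes it below -/
import Mathlib

section
/- Let λ be an F-invariant probability measure on ℝ^{2p} and π a probability measure. If λ = 2^{-p} Σ_{f ∈ F} π ∘ f⁻¹, then π is absolutely continuous with respect to λ with a density q satisfying Σ_{f ∈ F} q(f(x)) = 2^p for λ-almost all x. -/
/-!
Since `f_∅ = id`, `π ≤ 2^p λ`, so `π ≪ λ` with some density `q`. Each swap map is a
`λ`-preserving involution, so `π ∘ f⁻¹` has `λ`-density `q ∘ f`; averaging over `F`, `λ` has
density `2^{-p} ∑_f q ∘ f`, which must therefore be `1` `λ`-almost everywhere.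
-/

open MeasureTheory Set ENNReal

/-- The swap map `f_S` on `ℝ^p × ℝ^p`. -/
noncomputable def swapMap (p : ℕ) (S : Finset (Fin p)) :
    ((Fin p → ℝ) × (Fin p → ℝ)) → ((Fin p → ℝ) × (Fin p → ℝ)) :=
  fun z => (fun i => if i ∈ S then z.2 i else z.1 i,
            fun i => if i ∈ S then z.1 i else z.2 i)

namespace MeasureTheory

variable {α ι : Type*} [MeasurableSpace α] {μ ν : Measure α}

theorem Measure.withDensity_finsetSum {s : Finset ι} {g : ι → α → ℝ≥0∞}
    (hg : ∀ i ∈ s, Measurable (g i)) :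
    μ.withDensity (∑ i ∈ s, g i) = ∑ i ∈ s, μ.withDensity (g i) := by
  ext A hA
  simp only [withDensity_apply _ hA, Measure.coe_finsetSum, Finset.sum_apply]
  exact lintegral_finsetSum s hg

theorem MeasurePreserving.map_withDensity_of_involutive {f : α → α}
    (hf : MeasurePreserving f μ μ) (hinv : Function.Involutive f) (g : α → ℝ≥0∞) :
    (μ.withDensity g).map f = μ.withDensity (g ∘ f) := by
  ext s hs
  rw [Measure.map_apply hf.measurable hs, withDensity_apply _ (hf.measurable hs),
    withDensity_apply _ hs]
  have := hf.setLIntegral_comp_preimage_emb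
    (MeasurableEquiv.ofInvolutive f hinv hf.measurable).measurableEmbedding (g ∘ f) s
  simpa only [Function.comp_apply, hinv _] using this

theorem Measure.absolutelyContinuous_smul_sum_map [Fintype ι] {f : ι → α → α} {i₀ : ι}
    (hf : f i₀ = id) {c : ℝ≥0∞} (hc : c ≠ 0) :
    ν ≪ c • ∑ i, ν.map (f i) := by
  have hle : ν ≤ ∑ i, ν.map (f i) := by
    simpa [hf] using Finset.single_le_sum (f := fun i ↦ ν.map (f i))
      (fun i _ ↦ Measure.zero_le _) (Finset.mem_univ i₀)
  exact (Measure.absolutelyContinuous_of_le hle).trans (Measure.absolutelyContinuous_smul hc)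

theorem Measure.sum_rnDeriv_comp_ae_eq [Fintype ι] [SigmaFinite μ]
    [ν.HaveLebesgueDecomposition μ]
    {f : ι → α → α} (hf : ∀ i, MeasurePreserving (f i) μ μ)
    (hinv : ∀ i, Function.Involutive (f i)) {c : ℝ≥0∞} (hc0 : c ≠ 0) (hc : c ≠ ∞)
    (hνμ : ν ≪ μ) (hrep : μ = c⁻¹ • ∑ i, ν.map (f i)) :
    ∀ᵐ x ∂μ, ∑ i, ν.rnDeriv μ (f i x) = c := by
  set q := ν.rnDeriv μ
  have hfm : ∀ i, Measurable (f i) := fun i ↦ (hf i).measurable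
  have hqf : ∀ i, Measurable (q ∘ f i) := fun i ↦ (Measure.measurable_rnDeriv ν μ).comp (hfm i)
  have hmap : ∀ i, ν.map (f i) = μ.withDensity (q ∘ f i) := fun i ↦ by
    rw [← (hf i).map_withDensity_of_involutive (hinv i), Measure.withDensity_rnDeriv_eq ν μ hνμ]
  have hsum : Measurable (∑ i, q ∘ f i) := by fun_prop
  have hdensity : μ.withDensity (c⁻¹ • ∑ i, q ∘ f i) = μ.withDensity 1 := by
    rw [withDensity_smul _ hsum,
      Measure.withDensity_finsetSum fun i _ ↦ hqf i, withDensity_one]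
    simp_rw [← hmap, ← hrep]
  have hae := (withDensity_eq_iff_of_sigmaFinite
    (hsum.const_smul _).aemeasurable measurable_one.aemeasurable).mp hdensity
  filter_upwards [hae] with x hx
  simp only [Pi.smul_apply, Finset.sum_apply, Function.comp_apply, smul_eq_mul,
    Pi.one_apply] at hx
  rw [← ENNReal.mul_inv_cancel_left (b := ∑ i, q (f i x)) hc0 hc, hx, mul_one]

end MeasureTheory

theorem swapMap_measurable (p : ℕ) (S : Finset (Fin p)) : Measurable (swapMap p S) := by
  unfold swapMap
  refine .prod (measurable_pi_lambda _ fun i ↦ ?_) (measurable_pi_lambda _ fun i ↦ ?_) <;>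
    by_cases hi : i ∈ S <;> simp only [hi, if_true, if_false] <;> fun_prop

theorem swapMap_involutive (p : ℕ) (S : Finset (Fin p)) :
    Function.Involutive (swapMap p S) := by
  intro z
  ext i <;> by_cases hi : i ∈ S <;> simp [swapMap, hi]

theorem swapMap_empty (p : ℕ) : swapMap p ∅ = id := by
  funext z
  simp [swapMap]

theorem average_implies_density_general (p : ℕ)
    (lam π : Measure ((Fin p → ℝ) × (Fin p → ℝ)))
    [IsProbabilityMeasure lam] [IsProbabilityMeasure π]
    (hinv : ∀ S : Finset (Fin p), lam.map (swapMap p S) = lam)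
    (hrep : lam = ((2 : ℝ≥0∞) ^ p)⁻¹ • ∑ S : Finset (Fin p), π.map (swapMap p S)) :
    π ≪ lam ∧
    ∃ q : ((Fin p → ℝ) × (Fin p → ℝ)) → ℝ≥0∞, Measurable q ∧
      π = lam.withDensity q ∧
      ∀ᵐ z ∂lam, ∑ S : Finset (Fin p), q (swapMap p S z) = (2 : ℝ≥0∞) ^ p := by
  have h2p_ne_top : (2 : ℝ≥0∞) ^ p ≠ ∞ := ENNReal.pow_ne_top ofNat_ne_top
  have hac : π ≪ lam := hrep ▸ Measure.absolutelyContinuous_smul_sum_map (swapMap_empty p)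
    (ENNReal.inv_ne_zero.mpr h2p_ne_top)
  refine ⟨hac, π.rnDeriv lam, Measure.measurable_rnDeriv π lam,
    (Measure.withDensity_rnDeriv_eq π lam hac).symm, ?_⟩
  exact Measure.sum_rnDeriv_comp_ae_eq
    (fun S ↦ ⟨swapMap_measurable p S, hinv S⟩) (swapMap_involutive p) (by positivity)
    h2p_ne_top hac hrep

/-- If `λ` is `F`-invariant and `λ = 2^{-p} ∑_{f ∈ F} π ∘ f⁻¹`, then `π ≪ λ` and the
density `q` of `π` w.r.t. `λ` satisfies `∑_{f ∈ F} q(f(x)) = 2^p` for `λ`-a.e. `x`. -/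
theorem average_implies_density (p : ℕ) (hp : 2 ≤ p)
    (lam π : Measure ((Fin p → ℝ) × (Fin p → ℝ)))
    [IsProbabilityMeasure lam] [IsProbabilityMeasure π]
    (hinv : ∀ S : Finset (Fin p), lam.map (swapMap p S) = lam)
    (hrep : lam = ((2 : ℝ≥0∞) ^ p)⁻¹ • ∑ S : Finset (Fin p), π.map (swapMap p S)) :
    π ≪ lam ∧
    ∃ q : ((Fin p → ℝ) × (Fin p → ℝ)) → ℝ≥0∞, Measurable q ∧
      π = lam.withDensity q ∧
      ∀ᵐ z ∂lam, ∑ S : Finset (Fin p), q (swapMap p S z) = (2 : ℝ≥0∞) ^ p :=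
  average_implies_density_general p lam π hinv hrep
end

section
/- Let F be the distribution function of X with p-copula C, so F(x) = C(F₁(x₁),...,F_p(x_p)), and let D₁,...,D_p be 2-copulas. Define H(x) = C(D₁(F₁(x₁),F₁(x_{p+1})),...,D_p(F_p(x_p),F_p(x_{2p}))) for x ∈ ℝ^{2p}. If H is a distribution function on ℝ^{2p}, then for every swap map f ∈ F and every Borel A ⊆ ℝ^p, λ_H{x : f(x) ∈ A × ℝ^p} = P(X ∈ A). -/
open MeasureTheory Set ENNReal

/-- An `n`-copula: the distribution function of a probability measure with
uniform-on-`(0,1)` univariate marginals. -/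
def IsCopula {n : ℕ} (C : (Fin n → ℝ) → ℝ) : Prop :=
  ∃ μ : Measure (Fin n → ℝ), IsProbabilityMeasure μ ∧
    (∀ i, μ.map (fun y => y i) = volume.restrict (Set.Ioo (0:ℝ) 1)) ∧
    ∀ u, C u = (μ {y | ∀ i, y i ≤ u i}).toReal

/-- A `2`-copula, in curried form. -/
def IsCopula2 (D : ℝ → ℝ → ℝ) : Prop :=
  ∃ μ : Measure (ℝ × ℝ), IsProbabilityMeasure μ ∧
    μ.map Prod.fst = volume.restrict (Set.Ioo (0:ℝ) 1) ∧
    μ.map Prod.snd = volume.restrict (Set.Ioo (0:ℝ) 1) ∧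
    ∀ u v, D u v = (μ {y | y.1 ≤ u ∧ y.2 ≤ v}).toReal

open Filter Topology
open scoped symmDiff

/-! Let `f = swapMap p S`. Sending `x_{p+1}, …, x_{2p}` to `+∞` in `H(f(x))`, the boundary
conditions `D(1, u) = D(u, 1) = u` give `H(f(x)) → C(F₁(x₁), …, F_p(x_p)) = P(X ≤ (x₁, …, x_p))`,
because copulas are continuous: uniform marginals make them `1`-Lipschitz in each coordinate.
As `f` is an order-preserving involution, `H(f(x))` is the distribution function of `λ_H ∘ f⁻¹`
at `x`, so the first marginal of `λ_H ∘ f⁻¹` has the distribution function of `X`, hence is the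
law of `X`. -/

lemma symmDiff_Iic_subset_Ioc {α : Type*} [LinearOrder α] (a b : α) :
    Iic a ∆ Iic b ⊆ Ioc (a ⊓ b) (a ⊔ b) := by
  rintro t (⟨hta, htb⟩ | ⟨htb, hta⟩) <;> simp only [mem_Iic, not_le] at * <;>
    constructor <;> simp [*]

lemma volume_restrict_Ioo_symmDiff_Iic_le (a b : ℝ) :
    volume.restrict (Ioo (0:ℝ) 1) (Iic a ∆ Iic b) ≤ ENNReal.ofReal |a - b| :=
  calc volume.restrict (Ioo (0:ℝ) 1) (Iic a ∆ Iic b)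
      ≤ volume (Ioc (a ⊓ b) (a ⊔ b)) :=
        (Measure.restrict_apply_le _ _).trans (measure_mono (symmDiff_Iic_subset_Ioc a b))
    _ = ENNReal.ofReal |a - b| := by rw [Real.volume_Ioc, max_sub_min_eq_abs']

lemma volume_restrict_Ioo_Ioi_one : volume.restrict (Ioo (0:ℝ) 1) (Ioi 1) = 0 := by
  rw [Measure.restrict_apply measurableSet_Ioi, Ioi_inter_Ioo, Ioo_eq_empty (by norm_num),
    measure_empty]

lemma volume_restrict_Ioo_real_Iic {v : ℝ} (hv : v ∈ Icc (0:ℝ) 1) :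
    (volume.restrict (Ioo (0:ℝ) 1)).real (Iic v) = v := by
  rw [← measureReal_congr Iio_ae_eq_Iic, measureReal_restrict_apply measurableSet_Iio,
    Iio_inter_Ioo, min_eq_left hv.2, Real.volume_real_Ioo_of_le hv.1, sub_zero]

lemma abs_measureReal_sub_le_of_map_eq_uniform {α ι : Type*} [MeasurableSpace α] [Fintype ι]
    {μ : Measure α} [IsFiniteMeasure μ] {g : ι → α → ℝ} (hg : ∀ i, Measurable (g i))
    (hunif : ∀ i, μ.map (g i) = volume.restrict (Ioo (0:ℝ) 1)) (u u' : ι → ℝ) :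
    |μ.real {y | ∀ i, g i y ≤ u i} - μ.real {y | ∀ i, g i y ≤ u' i}| ≤ ∑ i, |u i - u' i| := by
  have hmeas : ∀ u : ι → ℝ, MeasurableSet {y | ∀ i, g i y ≤ u i} := fun u => by
    simp only [ofPred_forall]
    exact MeasurableSet.iInter fun i => hg i measurableSet_Iic
  have hsub : {y | ∀ i, g i y ≤ u i} ∆ {y | ∀ i, g i y ≤ u' i} ⊆
      ⋃ i, g i ⁻¹' (Iic (u i) ∆ Iic (u' i)) := by
    rintro y (⟨hy, hy'⟩ | ⟨hy, hy'⟩) <;> obtain ⟨i, hi⟩ := not_forall.1 hy'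
    exacts [mem_iUnion.2 ⟨i, Or.inl ⟨hy i, hi⟩⟩, mem_iUnion.2 ⟨i, Or.inr ⟨hy i, hi⟩⟩]
  have hcoord : ∀ i, μ.real (g i ⁻¹' (Iic (u i) ∆ Iic (u' i))) ≤ |u i - u' i| := fun i => by
    rw [measureReal_def,
      ← Measure.map_apply (hg i) (measurableSet_Iic.symmDiff measurableSet_Iic), hunif i]
    exact ENNReal.toReal_le_of_le_ofReal (abs_nonneg _)
      (volume_restrict_Ioo_symmDiff_Iic_le _ _)
  calc _ ≤ μ.real ({y | ∀ i, g i y ≤ u i} ∆ {y | ∀ i, g i y ≤ u' i}) :=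
        abs_measureReal_sub_le_measureReal_symmDiff (hmeas u).nullMeasurableSet
          (hmeas u').nullMeasurableSet
    _ ≤ μ.real (⋃ i, g i ⁻¹' (Iic (u i) ∆ Iic (u' i))) := measureReal_mono hsub
    _ ≤ ∑ i, μ.real (g i ⁻¹' (Iic (u i) ∆ Iic (u' i))) := measureReal_iUnion_fintype_le _
    _ ≤ ∑ i, |u i - u' i| := Finset.sum_le_sum fun i _ => hcoord i

lemma measureReal_preimage_Iic_one_inter_of_map_eq_uniform {α : Type*} [MeasurableSpace α]
    {μ : Measure α} {g h : α → ℝ} (hg : Measurable g) (hh : Measurable h)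
    (hgu : μ.map g = volume.restrict (Ioo (0:ℝ) 1))
    (hhu : μ.map h = volume.restrict (Ioo (0:ℝ) 1))
    {v : ℝ} (hv : v ∈ Icc (0:ℝ) 1) :
    μ.real (g ⁻¹' Iic 1 ∩ h ⁻¹' Iic v) = v := by
  have hfull : g ⁻¹' Iic 1 =ᵐ[μ] univ := by
    rw [ae_eq_univ, ← preimage_compl, compl_Iic, ← Measure.map_apply hg measurableSet_Ioi, hgu,
      volume_restrict_Ioo_Ioi_one]
  rw [measureReal_congr (inter_ae_eq_right_of_ae_eq_univ hfull),
    ← map_measureReal_apply hh measurableSet_Iic, hhu, volume_restrict_Ioo_real_Iic hv]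

lemma continuous_of_abs_sub_le_sum {ι : Type*} [Fintype ι] {f : (ι → ℝ) → ℝ}
    (hf : ∀ u u', |f u - f u'| ≤ ∑ i, |u i - u' i|) : Continuous f :=
  (LipschitzWith.of_dist_le_mul (K := Fintype.card ι) fun u u' => by
    rw [Real.dist_eq]
    calc |f u - f u'| ≤ ∑ i, |u i - u' i| := hf u u'
      _ ≤ ∑ _i : ι, dist u u' := Finset.sum_le_sum fun i _ => by
          rw [← Real.dist_eq]; exact dist_le_pi_dist u u' i
      _ = _ := by simp).continuous

lemma IsCopula.continuous {n : ℕ} {C : (Fin n → ℝ) → ℝ} (hC : IsCopula C) : Continuous C := by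
  obtain ⟨μ, _, hunif, hrep⟩ := hC
  refine continuous_of_abs_sub_le_sum fun u u' => ?_
  simpa only [hrep, measureReal_def] using
    abs_measureReal_sub_le_of_map_eq_uniform (fun i => measurable_pi_apply i) hunif u u'

namespace IsCopula2

variable {D : ℝ → ℝ → ℝ}

lemma continuous (hD : IsCopula2 D) : Continuous (Function.uncurry D) := by
  obtain ⟨μ, _, hfst, hsnd, hrep⟩ := hD
  have hvec : Continuous fun w : Fin 2 → ℝ => D (w 0) (w 1) := by
    refine continuous_of_abs_sub_le_sum fun w w' => ?_
    simpa [hrep, Fin.forall_fin_two, measureReal_def] using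
      abs_measureReal_sub_le_of_map_eq_uniform (μ := μ) (g := ![Prod.fst, Prod.snd])
        (Fin.forall_fin_two.2 ⟨measurable_fst, measurable_snd⟩)
        (Fin.forall_fin_two.2 ⟨hfst, hsnd⟩) w w'
  exact hvec.comp (by fun_prop : Continuous fun z : ℝ × ℝ => ![z.1, z.2])

lemma apply_one_left (hD : IsCopula2 D) {v : ℝ} (hv : v ∈ Icc (0:ℝ) 1) : D 1 v = v := by
  obtain ⟨μ, _, hfst, hsnd, hrep⟩ := hD
  rw [hrep]
  exact measureReal_preimage_Iic_one_inter_of_map_eq_uniform measurable_fst measurable_snd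
    hfst hsnd hv

lemma apply_one_right (hD : IsCopula2 D) {u : ℝ} (hu : u ∈ Icc (0:ℝ) 1) : D u 1 = u := by
  obtain ⟨μ, _, hfst, hsnd, hrep⟩ := hD
  rw [hrep, ← measureReal_def, show {y : ℝ × ℝ | y.1 ≤ u ∧ y.2 ≤ 1}
    = Prod.snd ⁻¹' Iic 1 ∩ Prod.fst ⁻¹' Iic u from inter_comm _ _]
  exact measureReal_preimage_Iic_one_inter_of_map_eq_uniform measurable_snd measurable_fst
    hsnd hfst hu

end IsCopula2

lemma tendsto_measureReal_preimage_Iic_atTop {α : Type*} [MeasurableSpace α] (μ : Measure α)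
    [IsProbabilityMeasure μ] (g : α → ℝ) :
    Tendsto (fun t => μ.real (g ⁻¹' Iic t)) atTop (𝓝 1) := by
  have h := tendsto_measure_iUnion_atTop (μ := μ)
    (fun t t' (h : t ≤ t') => preimage_mono (f := g) (Iic_subset_Iic.2 h))
  rw [← preimage_iUnion, iUnion_Iic, preimage_univ, measure_univ] at h
  simpa [Function.comp_def, measureReal_def] using (ENNReal.tendsto_toReal one_ne_top).comp h

lemma iUnion_Iic_const {ι : Type*} [Finite ι] : ⋃ t : ℝ, Iic (fun _ : ι => t) = univ :=
  eq_univ_of_forall fun y => by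
    obtain ⟨t, ht⟩ := Finite.bddAbove_range y
    exact mem_iUnion.2 ⟨t, fun i => ht (mem_range_self i)⟩

lemma monotone_Iic_const {ι : Type*} : Monotone fun t : ℝ => Iic fun _ : ι => t :=
  fun _ _ h => Iic_subset_Iic.2 fun _ => h

lemma tendsto_measure_prod_Iic_const_atTop {α ι : Type*} [MeasurableSpace α] [Finite ι]
    (ν : Measure (α × (ι → ℝ))) (s : Set α) :
    Tendsto (fun t : ℝ => ν (s ×ˢ Iic fun _ => t)) atTop (𝓝 (ν (Prod.fst ⁻¹' s))) := by
  rw [← prod_univ, ← iUnion_Iic_const, prod_iUnion]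
  exact tendsto_measure_iUnion_atTop fun _ _ h => prod_mono_right (monotone_Iic_const h)

lemma pi_eq_generateFrom_range_Iic {ι : Type*} [Finite ι] :
    (MeasurableSpace.pi : MeasurableSpace (ι → ℝ)) =
      MeasurableSpace.generateFrom (range Iic) := by
  have hspan : IsCountablySpanning (range (Iic : ℝ → Set ℝ)) :=
    ⟨fun n : ℕ => Iic (n : ℝ), fun n => mem_range_self _,
      eq_univ_of_forall fun t => mem_iUnion.2 (exists_nat_ge t)⟩
  rw [← generateFrom_eq_pi (C := fun _ => range Iic)
    (fun _ => (borel_eq_generateFrom_Iic ℝ).symm.trans BorelSpace.measurable_eq.symm)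
    (fun _ => hspan)]
  congr 1
  ext s
  constructor
  · rintro ⟨t, ht, rfl⟩
    choose x hx using fun i => ht i (mem_univ i)
    exact ⟨x, by rw [← pi_univ_Iic]; exact pi_congr rfl fun i _ => hx i⟩
  · rintro ⟨x, rfl⟩
    exact ⟨fun i => Iic (x i), fun i _ => mem_range_self _, pi_univ_Iic x⟩

lemma MeasureTheory.Measure.ext_of_pi_Iic {ι : Type*} [Finite ι] {μ ν : Measure (ι → ℝ)}
    [IsFiniteMeasure μ]
    (h : ∀ x, μ (Iic x) = ν (Iic x)) : μ = ν := by
  have hpi : IsPiSystem (range (Iic : (ι → ℝ) → Set (ι → ℝ))) := by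
    rintro _ ⟨a, rfl⟩ _ ⟨b, rfl⟩ -
    exact ⟨a ⊓ b, Iic_inter_Iic.symm⟩
  refine ext_of_generate_finite _ pi_eq_generateFrom_range_Iic hpi
    (by rintro _ ⟨x, rfl⟩; exact h x) ?_
  have hμ := tendsto_measure_iUnion_atTop (μ := μ) (monotone_Iic_const (ι := ι))
  have hν := tendsto_measure_iUnion_atTop (μ := ν) (monotone_Iic_const (ι := ι))
  rw [iUnion_Iic_const] at hμ hν
  exact tendsto_nhds_unique (by simpa only [Function.comp_def, h] using hμ) hν

section SwapMap

variable {p : ℕ} {S : Finset (Fin p)}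

lemma measurable_swapMap : Measurable (swapMap p S) :=
  (measurable_pi_lambda _ fun i => by split_ifs <;> fun_prop).prodMk
    (measurable_pi_lambda _ fun i => by split_ifs <;> fun_prop)

lemma swapMap_le_iff {w z : (Fin p → ℝ) × (Fin p → ℝ)} :
    swapMap p S w ≤ z ↔ w ≤ swapMap p S z := by
  simp only [swapMap, Prod.le_def, Pi.le_def]
  constructor <;> rintro ⟨h1, h2⟩ <;> refine ⟨fun i => ?_, fun i => ?_⟩ <;>
    specialize h1 i <;> specialize h2 i <;> split_ifs at * <;> assumption

lemma preimage_swapMap_Iic (z : (Fin p → ℝ) × (Fin p → ℝ)) :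
    swapMap p S ⁻¹' Iic z = Iic (swapMap p S z) :=
  ext fun _ => swapMap_le_iff

end SwapMap

lemma tendsto_copula_swapMap_atTop {p : ℕ} {C : (Fin p → ℝ) → ℝ} (hC : IsCopula C)
    {D : Fin p → ℝ → ℝ → ℝ} (hD : ∀ i, IsCopula2 (D i)) {F : Fin p → ℝ → ℝ}
    (hF01 : ∀ i t, F i t ∈ Icc (0:ℝ) 1) (hFtop : ∀ i, Tendsto (F i) atTop (𝓝 1))
    (S : Finset (Fin p)) (x : Fin p → ℝ) :
    Tendsto (fun t : ℝ => C fun i => D i (F i ((swapMap p S (x, fun _ => t)).1 i))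
      (F i ((swapMap p S (x, fun _ => t)).2 i))) atTop (𝓝 (C fun i => F i (x i))) := by
  refine (hC.continuous.tendsto _).comp (tendsto_pi_nhds.2 fun i => ?_)
  by_cases hi : i ∈ S
  · simpa [swapMap, hi, (hD i).apply_one_left (hF01 i (x i)), Function.comp_def] using
      ((hD i).continuous.tendsto (1, F i (x i))).comp
        ((hFtop i).prodMk_nhds tendsto_const_nhds)
  · simpa [swapMap, hi, (hD i).apply_one_right (hF01 i (x i)), Function.comp_def] using
      ((hD i).continuous.tendsto (F i (x i), 1)).comp
        (tendsto_const_nhds.prodMk_nhds (hFtop i))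

theorem copula_knockoff_marginals_general (p : ℕ)
    (μX : Measure (Fin p → ℝ)) [IsProbabilityMeasure μX]
    (F : Fin p → ℝ → ℝ) (hF : ∀ i t, F i t = (μX {x | x i ≤ t}).toReal)
    (C : (Fin p → ℝ) → ℝ) (hC : IsCopula C)
    (hSklar : ∀ x : Fin p → ℝ, (μX {y | ∀ i, y i ≤ x i}).toReal = C (fun i => F i (x i)))
    (D : Fin p → ℝ → ℝ → ℝ) (hD : ∀ i, IsCopula2 (D i))
    (H : ((Fin p → ℝ) × (Fin p → ℝ)) → ℝ)
    (hH : ∀ z, H z = C (fun i => D i (F i (z.1 i)) (F i (z.2 i))))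
    (lamH : Measure ((Fin p → ℝ) × (Fin p → ℝ))) [IsProbabilityMeasure lamH]
    (hCDF : ∀ z, H z =
      (lamH {w | (∀ i, w.1 i ≤ z.1 i) ∧ (∀ i, w.2 i ≤ z.2 i)}).toReal) :
    ∀ S : Finset (Fin p), ∀ A : Set (Fin p → ℝ), MeasurableSet A →
      lamH {z | (swapMap p S z).1 ∈ A} = μX A := by
  intro S A hA
  have hF01 : ∀ i t, F i t ∈ Icc (0:ℝ) 1 := fun i t =>
    hF i t ▸ ⟨measureReal_nonneg, measureReal_le_one⟩
  have hFtop : ∀ i, Tendsto (F i) atTop (𝓝 1) := fun i =>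
    (tendsto_measureReal_preimage_Iic_atTop μX (· i)).congr fun t => (hF i t).symm
  set ν := lamH.map (swapMap p S)
  have hν : ∀ x t, ν.real (Iic x ×ˢ Iic fun _ => t) = H (swapMap p S (x, fun _ => t)) :=
    fun x t => by
      rw [Iic_prod_Iic, map_measureReal_apply measurable_swapMap measurableSet_Iic,
        preimage_swapMap_Iic, hCDF]
      rfl
  have hfst : ν.map Prod.fst = μX := Measure.ext_of_pi_Iic fun x => by
    have hlim := (ENNReal.tendsto_toReal (measure_ne_top _ _)).comp
      (tendsto_measure_prod_Iic_const_atTop ν (Iic x))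
    rw [Measure.map_apply measurable_fst measurableSet_Iic, ← measureReal_eq_measureReal_iff]
    refine (tendsto_nhds_unique hlim ?_).trans (hSklar x).symm
    simpa only [Function.comp_def, ← measureReal_def, hν, hH] using
      tendsto_copula_swapMap_atTop hC hD hF01 hFtop S x
  rw [← hfst, Measure.map_apply measurable_fst hA,
    Measure.map_apply measurable_swapMap (measurable_fst hA)]
  rfl

/-- If `H(x) = C(D₁(F₁(x₁),F₁(x_{p+1})),…,D_p(F_p(x_p),F_p(x_{2p})))` is a distribution
function on `ℝ^{2p}`, then `λ_H {x : f(x) ∈ A × ℝ^p} = P(X ∈ A)` for every swap map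
`f ∈ F` and Borel `A`. -/
theorem copula_knockoff_marginals (p : ℕ) (hp : 2 ≤ p)
    (μX : Measure (Fin p → ℝ)) [IsProbabilityMeasure μX]
    (F : Fin p → ℝ → ℝ) (hF : ∀ i t, F i t = (μX {x | x i ≤ t}).toReal)
    (C : (Fin p → ℝ) → ℝ) (hC : IsCopula C)
    (hSklar : ∀ x : Fin p → ℝ, (μX {y | ∀ i, y i ≤ x i}).toReal = C (fun i => F i (x i)))
    (D : Fin p → ℝ → ℝ → ℝ) (hD : ∀ i, IsCopula2 (D i))
    (H : ((Fin p → ℝ) × (Fin p → ℝ)) → ℝ)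
    (hH : ∀ z, H z = C (fun i => D i (F i (z.1 i)) (F i (z.2 i))))
    (lamH : Measure ((Fin p → ℝ) × (Fin p → ℝ))) [IsProbabilityMeasure lamH]
    (hCDF : ∀ z, H z =
      (lamH {w | (∀ i, w.1 i ≤ z.1 i) ∧ (∀ i, w.2 i ≤ z.2 i)}).toReal) :
    ∀ S : Finset (Fin p), ∀ A : Set (Fin p → ℝ), MeasurableSet A →
      lamH {z | (swapMap p S z).1 ∈ A} = μX A :=
  copula_knockoff_marginals_general p μX F hF C hC hSklar D hD H hH lamH hCDF
end
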